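/- For g ∈ {0,1}, let μ_g be a Borel probability measure on [0,1] (the score distribution of group g), let (Φ_g, 𝒜_g, ν_g) be a probability space, let F_g : [0,1] × Φ_g → [0,1] be jointly measurable, and let f*_g : [0,1] → [0,1] be measurable. Define, for a measurable h : [0,1] → [0,1], the accuracy functional A_g(h) = ∫_{[0,1]} ((1 − h(s))·1{s < 1/2} + h(s)·1{s ≥ 1/2}) dμ_g(s); set f̄_g(s) = ∫_{Φ_g} F_g(s,φ) dν_g(φ), E_φθ_g = ∫_{Φ_g} A_g(F_g(·,φ)) dν_g(φ), E_φΔ = E_φθ_1 − E_φθ_0, and Δ* = A_1(f*_1) − A_0(f*_0). Then |E_φΔ − Δ*| ≤ ∫_{[0,1]} |f̄_0(s) − f*_0(s)| dμ_0(s) + ∫_{[0,1]} |f̄_1(s) − f*_1(s)| dμ_1(s). -/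

import Mathlib

open MeasureTheory Set

/-!
At a score `s`, the thresholded classifier is correct with probability `1 - x` below `1/2` and `x`
above it, where `x = P(y = 1 | s)`. This is affine in `x`, so it is 1-Lipschitz in `x` and commutes
with averaging over `φ`. By Fubini the expected accuracy is therefore the accuracy of the averaged
calibration function `f̄`, and the Lipschitz bound controls each group's accuracy error by its L1
calibration error; the triangle inequality combines the two groups.
-/

/-- The accuracy functional: given a score distribution `μ` on `[0,1]` and a calibration
function `h`, `acc μ h = ∫ ((1 - h s)·1{s < 1/2} + h s·1{s ≥ 1/2}) dμ(s)`. -/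
noncomputable def acc (μ : Measure (Icc (0:ℝ) 1)) (h : Icc (0:ℝ) 1 → ℝ) : ℝ :=
  ∫ s, ((1 - h s) * (if (s : ℝ) < 1/2 then (1:ℝ) else 0)
      + h s * (if (1:ℝ)/2 ≤ (s : ℝ) then (1:ℝ) else 0)) ∂μ

noncomputable def accuracyAt (s : Icc (0:ℝ) 1) (x : ℝ) : ℝ :=
  if (s : ℝ) < 1/2 then 1 - x else x

lemma acc_eq_integral_accuracyAt (μ : Measure (Icc (0:ℝ) 1)) (h : Icc (0:ℝ) 1 → ℝ) :
    acc μ h = ∫ s, accuracyAt s (h s) ∂μ := by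
  refine integral_congr_ae (ae_of_all _ fun s => ?_)
  simp only [accuracyAt]
  split_ifs <;> linarith

lemma abs_accuracyAt_sub (s : Icc (0:ℝ) 1) (x y : ℝ) :
    |accuracyAt s x - accuracyAt s y| = |x - y| := by
  unfold accuracyAt
  split_ifs
  · rw [show 1 - x - (1 - y) = y - x by ring, abs_sub_comm]
  · rfl

lemma integral_accuracyAt {Φ : Type*} [MeasurableSpace Φ] (ν : Measure Φ)
    [IsProbabilityMeasure ν] (s : Icc (0:ℝ) 1) {f : Φ → ℝ} (hf : Integrable f ν) :
    ∫ φ, accuracyAt s (f φ) ∂ν = accuracyAt s (∫ φ, f φ ∂ν) := by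
  unfold accuracyAt
  split_ifs
  · rw [integral_sub (integrable_const 1) hf, integral_const, probReal_univ, one_smul]
  · rfl

lemma MeasureTheory.Integrable.accuracyAt_comp {α : Type*} [MeasurableSpace α] {μ : Measure α}
    [IsFiniteMeasure μ] {σ : α → Icc (0:ℝ) 1} (hσ : Measurable σ) {f : α → ℝ}
    (hf : Integrable f μ) : Integrable (fun a => accuracyAt (σ a) (f a)) μ := by
  classical
  have hlow : MeasurableSet (σ ⁻¹' {s | (s : ℝ) < 1/2}) :=
    hσ (measurableSet_lt measurable_subtype_coe measurable_const)
  refine (Integrable.piecewise hlow ((integrable_const 1).sub hf).integrableOn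
    hf.integrableOn).congr (ae_of_all _ fun a => ?_)
  simp [Set.piecewise, accuracyAt]

lemma Measurable.integrable_of_mem_Icc {α : Type*} [MeasurableSpace α] {μ : Measure α}
    [IsFiniteMeasure μ] {f : α → ℝ} (hf : Measurable f) (hf01 : ∀ a, f a ∈ Icc (0:ℝ) 1) :
    Integrable f μ :=
  .of_bound hf.aestronglyMeasurable 1 (ae_of_all _ fun a =>
    abs_le.mpr ⟨by linarith [(hf01 a).1], (hf01 a).2⟩)

lemma abs_acc_sub_le {μ : Measure (Icc (0:ℝ) 1)} [IsFiniteMeasure μ] {h h' : Icc (0:ℝ) 1 → ℝ}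
    (hh : Integrable h μ) (hh' : Integrable h' μ) :
    |acc μ h - acc μ h'| ≤ ∫ s, |h s - h' s| ∂μ := by
  have hint {g : Icc (0:ℝ) 1 → ℝ} (hg : Integrable g μ) :
      Integrable (fun s => accuracyAt s (g s)) μ :=
    hg.accuracyAt_comp measurable_id
  rw [acc_eq_integral_accuracyAt, acc_eq_integral_accuracyAt, ← integral_sub (hint hh) (hint hh')]
  simpa only [abs_accuracyAt_sub] using
    abs_integral_le_integral_abs (f := fun s => accuracyAt s (h s) - accuracyAt s (h' s))

lemma integral_acc {Φ : Type*} [MeasurableSpace Φ] {μ : Measure (Icc (0:ℝ) 1)}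
    [IsFiniteMeasure μ] {ν : Measure Φ} [IsProbabilityMeasure ν] {F : Icc (0:ℝ) 1 → Φ → ℝ}
    (hF : Integrable (Function.uncurry F) (μ.prod ν)) :
    ∫ φ, acc μ (fun s => F s φ) ∂ν = acc μ (fun s => ∫ φ, F s φ ∂ν) := by
  simp only [acc_eq_integral_accuracyAt]
  rw [← integral_integral_swap (f := fun s φ => accuracyAt s (F s φ))
    (hF.accuracyAt_comp measurable_fst)]
  exact integral_congr_ae (hF.prod_right_ae.mono fun s hs => integral_accuracyAt ν s hs)

/-- Lemma 2.1 of the paper: the absolute error of the expected estimate of the group-fairness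
metric Δ (difference of groupwise accuracies) is bounded by the sum of the two groupwise
expected L1 calibration errors. -/
theorem expected_delta_error_le_sum_calibration_errors
    {Φ₀ Φ₁ : Type*} [MeasurableSpace Φ₀] [MeasurableSpace Φ₁]
    (μ₀ μ₁ : Measure (Icc (0:ℝ) 1)) [IsProbabilityMeasure μ₀] [IsProbabilityMeasure μ₁]
    (ν₀ : Measure Φ₀) [IsProbabilityMeasure ν₀]
    (ν₁ : Measure Φ₁) [IsProbabilityMeasure ν₁]
    (F₀ : Icc (0:ℝ) 1 → Φ₀ → ℝ) (F₁ : Icc (0:ℝ) 1 → Φ₁ → ℝ)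
    (hF₀ : Measurable (Function.uncurry F₀))
    (hF₁ : Measurable (Function.uncurry F₁))
    (hF₀range : ∀ s φ, F₀ s φ ∈ Icc (0:ℝ) 1)
    (hF₁range : ∀ s φ, F₁ s φ ∈ Icc (0:ℝ) 1)
    (fstar₀ fstar₁ : Icc (0:ℝ) 1 → ℝ)
    (hfstar₀ : Measurable fstar₀) (hfstar₁ : Measurable fstar₁)
    (hfstar₀Range : ∀ s, fstar₀ s ∈ Icc (0:ℝ) 1)
    (hfstar₁Range : ∀ s, fstar₁ s ∈ Icc (0:ℝ) 1) :
    |((∫ φ, acc μ₁ (fun s => F₁ s φ) ∂ν₁) - (∫ φ, acc μ₀ (fun s => F₀ s φ) ∂ν₀))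
        - (acc μ₁ fstar₁ - acc μ₀ fstar₀)|
      ≤ (∫ s, |(∫ φ, F₀ s φ ∂ν₀) - fstar₀ s| ∂μ₀)
        + ∫ s, |(∫ φ, F₁ s φ ∂ν₁) - fstar₁ s| ∂μ₁ := by
  have hF₀int : Integrable (Function.uncurry F₀) (μ₀.prod ν₀) :=
    hF₀.integrable_of_mem_Icc fun p => hF₀range p.1 p.2
  have hF₁int : Integrable (Function.uncurry F₁) (μ₁.prod ν₁) :=
    hF₁.integrable_of_mem_Icc fun p => hF₁range p.1 p.2
  have error₀ : |acc μ₀ (fun s => ∫ φ, F₀ s φ ∂ν₀) - acc μ₀ fstar₀| ≤ _ :=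
    abs_acc_sub_le hF₀int.integral_prod_left (hfstar₀.integrable_of_mem_Icc hfstar₀Range)
  have error₁ : |acc μ₁ (fun s => ∫ φ, F₁ s φ ∂ν₁) - acc μ₁ fstar₁| ≤ _ :=
    abs_acc_sub_le hF₁int.integral_prod_left (hfstar₁.integrable_of_mem_Icc hfstar₁Range)
  rw [integral_acc hF₀int, integral_acc hF₁int]
  calc _ = |(acc μ₁ (fun s => ∫ φ, F₁ s φ ∂ν₁) - acc μ₁ fstar₁)
          - (acc μ₀ (fun s => ∫ φ, F₀ s φ ∂ν₀) - acc μ₀ fstar₀)| := by ring_nf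
    _ ≤ _ := (abs_sub _ _).trans (by linarith)
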